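/- Let Γ be an L-CoLT matrix with diagonal vector γ and ratio vector r, and let C be the matrix with entries c_{ij} = |i-j|·h. Then the sum of all entries of C ⊙ Γ on the lower triangle equals ∑_{k=1}^N p_k, where p_1 = 0, p_2 = h γ_1 r_1, p'_2 = h γ_1 r_1 + h γ_2, and for i ≥ 3, p_i = r_{i-1}(p_{i-1} + p'_{i-1}), p'_i = r_{i-1} p'_{i-1} + h γ_i. That is, ∑_{i ≥ j} (i-j)h · γ_j ∏_{k=j}^{i-1} r_k = ∑_{k=1}^N p_k. -/

import Mathlib

open Matrix Finset

/-- `A` is an L-CoLT matrix with ratio vector `r` (0-indexed; `r` has `N-1` meaningful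
nonzero entries): `A (i+1) j = r i * A i j` for `j ≤ i`, and `A i j = 0` for `i < j`. -/
def IsLCoLT {N : ℕ} (A : Matrix (Fin N) (Fin N) ℝ) (r : ℕ → ℝ) : Prop :=
  (∀ k, k + 1 < N → r k ≠ 0) ∧
  (∀ i i' j : Fin N, (i' : ℕ) = (i : ℕ) + 1 → (j : ℕ) ≤ (i : ℕ) → A i' j = r i * A i j) ∧
  (∀ i j : Fin N, (i : ℕ) < (j : ℕ) → A i j = 0)

/-- `A` is a U-CoLT matrix with ratio vector `r'` (0-indexed; `r'` has `N-2` meaningful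
nonzero entries): `A (i-1) j = r' (i-1) * A i j` for `i < j`, and `A i j = 0` for `j ≤ i`. -/
def IsUCoLT {N : ℕ} (A : Matrix (Fin N) (Fin N) ℝ) (r' : ℕ → ℝ) : Prop :=
  (∀ k, k + 2 < N → r' k ≠ 0) ∧
  (∀ i i' j : Fin N, (i : ℕ) = (i' : ℕ) + 1 → (i : ℕ) < (j : ℕ) → A i' j = r' i' * A i j) ∧
  (∀ i j : Fin N, (j : ℕ) ≤ (i : ℕ) → A i j = 0)

/-- The pair (p_k, p'_k) of the O(N) recursion (0-indexed): p_0 = 0, p'_0 = h γ_0,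
p_{k+1} = r_k (p_k + p'_k), p'_{k+1} = r_k p'_k + h γ_{k+1}. -/
def pP (h : ℝ) (γ r : ℕ → ℝ) : ℕ → ℝ × ℝ
  | 0 => (0, h * γ 0)
  | k + 1 => (r k * ((pP h γ r k).1 + (pP h γ r k).2),
              r k * (pP h γ r k).2 + h * γ (k + 1))

/-!
With `Γ_{k,j} = γ_j ∏_{j ≤ m < k} r_m`, one has `p'_k = h ∑_j Γ_{k,j}` and `p_k = ∑_j (k - j) h Γ_{k,j}`:
multiplying row `k` by `r_k` gives row `k+1` off its diagonal and raises every distance `k - j` by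
one, which is exactly `p_{k+1} = r_k (p_k + p'_k)`.
-/

lemma mul_prod_Ico_succ_top (r : ℕ → ℝ) (c : ℝ) {j k : ℕ} (hjk : j ≤ k) :
    r k * (c * ∏ m ∈ Ico j k, r m) = c * ∏ m ∈ Ico j (k + 1), r m := by
  rw [prod_Ico_succ_top hjk]
  ring

lemma pP_snd_eq_sum (h : ℝ) (γ r : ℕ → ℝ) (k : ℕ) :
    (pP h γ r k).2 = ∑ j ∈ range (k + 1), h * (γ j * ∏ m ∈ Ico j k, r m) := by
  induction k with
  | zero => simp [pP]
  | succ k ih =>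
    rw [pP, ih, sum_range_succ (n := k + 1), mul_sum]
    simp only [Finset.Ico_self, prod_empty, mul_one]
    congr 1
    refine Finset.sum_congr rfl fun j hj => ?_
    rw [mul_left_comm, mul_prod_Ico_succ_top r _ (Nat.lt_succ_iff.mp (mem_range.mp hj))]

lemma pP_fst_eq_sum (h : ℝ) (γ r : ℕ → ℝ) (k : ℕ) :
    (pP h γ r k).1 = ∑ j ∈ range (k + 1), ((k - j : ℕ) : ℝ) * h * (γ j * ∏ m ∈ Ico j k, r m) := by
  induction k with
  | zero => simp [pP]
  | succ k ih =>
    rw [pP, ih, pP_snd_eq_sum, sum_range_succ (n := k + 1), ← sum_add_distrib, mul_sum]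
    simp only [Nat.sub_self, Nat.cast_zero, zero_mul, add_zero]
    refine Finset.sum_congr rfl fun j hj => ?_
    have hjk : j ≤ k := Nat.lt_succ_iff.mp (mem_range.mp hj)
    have hdist : ((k + 1 - j : ℕ) : ℝ) = ((k - j : ℕ) : ℝ) + 1 := by
      push_cast [Nat.succ_sub hjk]
      ring
    rw [← mul_prod_Ico_succ_top r _ hjk, hdist]
    ring

lemma sum_fin_ite_le_eq_sum_range {M : Type*} [AddCommMonoid M] {N i : ℕ} (hi : i < N)
    (f : ℕ → M) : ∑ j : Fin N, (if (j : ℕ) ≤ i then f j else 0) = ∑ j ∈ range (i + 1), f j := by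
  rw [Fin.sum_univ_eq_sum_range (fun j => if j ≤ i then f j else 0), ← sum_filter]
  congr 1
  ext j
  simp only [mem_filter, mem_range]
  omega

theorem stmt13 {N : ℕ} (h : ℝ) (γ r : ℕ → ℝ) :
    ∑ i : Fin N, ∑ j : Fin N,
      (if (j : ℕ) ≤ (i : ℕ) then
        ((((i : ℕ) - (j : ℕ) : ℕ)) : ℝ) * h *
          (γ (j : ℕ) * ∏ k ∈ Finset.Ico (j : ℕ) (i : ℕ), r k)
      else 0)
      = ∑ k : Fin N, (pP h γ r (k : ℕ)).1 := by
  refine Finset.sum_congr rfl fun i _ => ?_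
  rw [pP_fst_eq_sum, sum_fin_ite_le_eq_sum_range i.isLt
    (fun j => ((i - j : ℕ) : ℝ) * h * (γ j * ∏ k ∈ Ico j i, r k))]
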